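/- arXiv:math/0308242 — 2 statements merged into one kernel-verified Lean document; each statement's English description precedes it below -/
import Mathlib

section
/- Let f : ℝ → ℝ be twice differentiable with f''(x) = x·f(x) for all x, and suppose f(x) → 0 and f'(x) → 0 as x → ∞. Then for every a ∈ ℝ, ∫ₐ^∞ f(x)² dx = f'(a)² − a·f(a)². -/
/-!
With `E(x) = x f(x)² - f'(x)²` the Airy equation gives `E' = f²`, so the integral is
`lim E - E(a)` and it remains to show `E → 0`. Since `(f f')' = f'² + x f² ≥ 0` for `x ≥ 0` and
`f f' → 0`, the function `f'² + x f²`, hence also `f²`, is integrable at infinity. Therefore `E`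
converges, so does `x f² = E + f'²`, and its limit must be `0`, as otherwise `f² ≳ 1/x`.
-/
open MeasureTheory Filter Set Topology Asymptotics

theorem eq_zero_of_tendsto_mul_of_integrableOn_Ioi {g : ℝ → ℝ} {a L : ℝ}
    (hg : IntegrableOn g (Ioi a)) (hL : Tendsto (fun x => x * g x) atTop (𝓝 L)) : L = 0 := by
  by_contra hL0
  have hL_pos : 0 < ‖L‖ := norm_pos_iff.2 hL0
  have hinv : (fun x : ℝ => x⁻¹) =O[atTop] g := by
    refine IsBigO.of_bound (2 / ‖L‖) ?_
    filter_upwards [hL.norm.eventually (eventually_ge_nhds (half_lt_self hL_pos)),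
      eventually_gt_atTop 0] with x hx hx0
    rw [norm_mul, Real.norm_of_nonneg hx0.le] at hx
    rw [norm_inv, Real.norm_of_nonneg hx0.le, inv_le_iff_one_le_mul₀ hx0]
    calc (1:ℝ) = 2 / ‖L‖ * (‖L‖ / 2) := by field_simp
      _ ≤ 2 / ‖L‖ * (x * ‖g x‖) := by gcongr
      _ = _ := by ring
  obtain ⟨b, hb⟩ := integrableAtFilter_atTop_iff.1 <|
    hinv.integrableAtFilter measurable_inv.stronglyMeasurable.stronglyMeasurableAtFilter
      ⟨Ioi a, Ioi_mem_atTop a, hg⟩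
  exact not_integrableOn_Ici_inv hb

noncomputable def airyEnergy (f : ℝ → ℝ) (x : ℝ) : ℝ := x * f x ^ 2 - deriv f x ^ 2

section Airy

variable {f : ℝ → ℝ} (hf : Differentiable ℝ f) (hf' : Differentiable ℝ (deriv f))
  (hAiry : ∀ x, deriv (deriv f) x = x * f x)
include hf hf' hAiry

theorem hasDerivAt_mul_deriv_of_airy (x : ℝ) :
    HasDerivAt (fun x => f x * deriv f x) (deriv f x ^ 2 + x * f x ^ 2) x := by
  refine ((hf x).hasDerivAt.mul (hf' x).hasDerivAt).congr_deriv ?_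
  rw [hAiry x]; ring

theorem hasDerivAt_airyEnergy (x : ℝ) : HasDerivAt (airyEnergy f) (f x ^ 2) x := by
  refine (((hasDerivAt_id x).mul ((hf x).hasDerivAt.fun_pow 2)).sub
    ((hf' x).hasDerivAt.fun_pow 2)).congr_deriv ?_
  rw [hAiry x]; simp only [id]; ring

theorem integrableOn_sq_Ioi_one_of_airy (hlim : Tendsto f atTop (𝓝 0))
    (hlim' : Tendsto (deriv f) atTop (𝓝 0)) : IntegrableOn (fun x => f x ^ 2) (Ioi 1) := by
  have hk : IntegrableOn (fun x => deriv f x ^ 2 + x * f x ^ 2) (Ioi 1) :=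
    integrableOn_Ioi_deriv_of_nonneg' (fun x _ => hasDerivAt_mul_deriv_of_airy hf hf' hAiry x)
      (fun x hx => by have : (0:ℝ) < x := one_pos.trans hx; positivity)
      (by simpa using hlim.mul hlim')
  refine hk.mono' (hf.continuous.pow 2).aestronglyMeasurable ?_
  filter_upwards [ae_restrict_mem measurableSet_Ioi] with x (hx : 1 < x)
  rw [Real.norm_of_nonneg (sq_nonneg _)]
  nlinarith [sq_nonneg (f x), sq_nonneg (deriv f x)]

theorem tendsto_airyEnergy_atTop (hlim : Tendsto f atTop (𝓝 0))
    (hlim' : Tendsto (deriv f) atTop (𝓝 0)) : Tendsto (airyEnergy f) atTop (𝓝 0) := by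
  have hint := integrableOn_sq_Ioi_one_of_airy hf hf' hAiry hlim hlim'
  have hE : Tendsto (airyEnergy f) atTop (𝓝 (airyEnergy f 1 + ∫ x in Ioi 1, f x ^ 2)) := by
    refine ((intervalIntegral_tendsto_integral_Ioi 1 hint tendsto_id).const_add
      (airyEnergy f 1)).congr' ?_
    filter_upwards [eventually_ge_atTop 1] with x hx
    rw [id, intervalIntegral.integral_eq_sub_of_hasDerivAt
      (fun t _ => hasDerivAt_airyEnergy hf hf' hAiry t)
      ((intervalIntegrable_iff_integrableOn_Ioc_of_le hx).2 (hint.mono_set Ioc_subset_Ioi_self))]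
    ring
  have hxf : Tendsto (fun x => x * f x ^ 2) atTop
      (𝓝 (airyEnergy f 1 + ∫ x in Ioi 1, f x ^ 2)) := by
    simpa [airyEnergy] using hE.add (hlim'.pow 2)
  rwa [eq_zero_of_tendsto_mul_of_integrableOn_Ioi hint hxf] at hE

end Airy

theorem stmt_2 (f : ℝ → ℝ) (hf : Differentiable ℝ f)
    (hf' : Differentiable ℝ (deriv f))
    (hAiry : ∀ x, deriv (deriv f) x = x * f x)
    (hlim : Filter.Tendsto f Filter.atTop (nhds 0))
    (hlim' : Filter.Tendsto (deriv f) Filter.atTop (nhds 0)) :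
    ∀ a : ℝ, ∫ x in Set.Ioi a, (f x) ^ 2 = (deriv f a) ^ 2 - a * (f a) ^ 2 := by
  intro a
  rw [integral_Ioi_of_hasDerivAt_of_nonneg' (fun x _ => hasDerivAt_airyEnergy hf hf' hAiry x)
    (fun x _ => sq_nonneg _) (tendsto_airyEnergy_atTop hf hf' hAiry hlim hlim')]
  simp only [airyEnergy]; ring
end

section
/- Let 0 < θ ≤ 1 and ν ≥ 0, and let Ω : ℝ₊ → ℝ₊ satisfy Ω(y) ≥ θ y for y ∈ [0,1] and Ω(y) ≤ 6 e^{−y} for all y ≥ 0. Then for every λ ∈ (0,1] and every Γ ≥ 1: ∫₀^∞ Ω(y) min{λ y e^{−aΓ}, e^{−a λ y Γ^{1/3}}} e^{−ν y} dy ≤ C e^{−a Γ^{1/3}} ∫₀^∞ Ω(y) Ω(λ y) e^{−ν y} dy, for constants a > 0 and C depending only on θ and a. -/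
/-!
Write `K = Γ^{1/3}` and split at `λy = 1`. For `λy ≤ 1` the error kernel is at most
`λy e^{-K}`, and the lower bound `Ω(λy) ≥ θλy` turns this into `e^{-K} Ω(λy) / θ`. For `λy > 1`
it is at most `e^{-K}`, and the tail `∫_{y > 1/λ} 6 e^{-y} e^{-ν} = 6 e^{-ν} e^{-1/λ} ≤ 6λ e^{-ν}`
is absorbed by the main term, which is at least `∫₀¹ θy · θλy · e^{-ν} dy = θ²λe^{-ν}/3`.
-/

open MeasureTheory Set Real

lemma Real.exp_neg_inv_le {x : ℝ} (hx : 0 < x) : exp (-x⁻¹) ≤ x := by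
  rw [exp_neg, inv_le_comm₀ (exp_pos _) hx]
  linarith [add_one_le_exp x⁻¹]

lemma min_mul_exp_le_exp_mul_min {a K Γ t : ℝ} (ha : 0 ≤ a) (hK : 0 ≤ K) (hKΓ : K ≤ Γ)
    (ht : 0 ≤ t) :
    min (t * exp (-a * Γ)) (exp (-a * t * K)) ≤ exp (-a * K) * min t 1 := by
  rcases le_total t 1 with h | h
  · rw [min_eq_left h, mul_comm (exp _)]
    exact (min_le_left _ _).trans
      (mul_le_mul_of_nonneg_left (exp_le_exp.2 (by nlinarith)) ht)
  · rw [min_eq_right h, mul_one]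
    exact (min_le_right _ _).trans
      (exp_le_exp.2 (by nlinarith [mul_nonneg (mul_nonneg ha hK) (sub_nonneg.2 h)]))

lemma AEMeasurable.of_mul_right {α : Type*} [MeasurableSpace α] {μ : Measure α}
    {f w : α → ℝ} (hfw : AEMeasurable (fun x ↦ f x * w x) μ) (hw : AEMeasurable w μ)
    (hw0 : ∀ᵐ x ∂μ, w x ≠ 0) : AEMeasurable f μ :=
  (hfw.div hw).congr (hw0.mono fun x hx ↦ mul_div_cancel_right₀ (f x) hx)

lemma AEMeasurable.comp_mul_left_restrict_Ioi {f : ℝ → ℝ} {c : ℝ} (hc : 0 < c)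
    (hf : AEMeasurable f (volume.restrict (Ioi 0))) :
    AEMeasurable (fun y ↦ f (c * y)) (volume.restrict (Ioi 0)) :=
  hf.comp_quasiMeasurePreserving <|
    (Measure.quasiMeasurePreserving_smul volume hc.ne').restrict fun _ hy ↦
      mul_pos hc hy

lemma integrableOn_Ioi_of_norm_le_exp_neg {φ : ℝ → ℝ}
    (hφ : AEMeasurable φ (volume.restrict (Ioi 0))) (C : ℝ)
    (hle : ∀ y > 0, ‖φ y‖ ≤ C * exp (-y)) : IntegrableOn φ (Ioi 0) := by
  refine Integrable.mono' ?_ hφ.aestronglyMeasurable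
    ((ae_restrict_iff' measurableSet_Ioi).2 (Filter.Eventually.of_forall hle))
  simpa using (exp_neg_integrableOn_Ioi 0 one_pos).const_mul C

section

variable {θ ν lam B : ℝ} {Ω : ℝ → ℝ}

lemma integrableOn_Ioi_mul_comp_mul_exp (hΩm : AEMeasurable Ω (volume.restrict (Ioi 0)))
    (hΩ : ∀ y, 0 ≤ y → 0 ≤ Ω y ∧ Ω y ≤ B * exp (-y)) (hν : 0 ≤ ν) (hlam : 0 < lam) :
    IntegrableOn (fun y ↦ Ω y * Ω (lam * y) * exp (-ν * y)) (Ioi 0) := by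
  refine integrableOn_Ioi_of_norm_le_exp_neg
    ((hΩm.mul (hΩm.comp_mul_left_restrict_Ioi hlam)).mul (by fun_prop)) (B * B) fun y hy ↦ ?_
  obtain ⟨h0, hle⟩ := hΩ y hy.le
  obtain ⟨h0', hle'⟩ := hΩ (lam * y) (by positivity)
  have hexp : exp (-(lam * y)) ≤ 1 := exp_le_one_iff.2 (by nlinarith)
  have hexp' : exp (-ν * y) ≤ 1 := exp_le_one_iff.2 (by nlinarith)
  have hB : 0 ≤ B := nonneg_of_mul_nonneg_left (h0.trans hle) (exp_pos (-y))
  rw [Real.norm_of_nonneg (by positivity)]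
  calc Ω y * Ω (lam * y) * exp (-ν * y) ≤ (B * exp (-y)) * B * 1 := by
        gcongr
        exact hle'.trans (mul_le_of_le_one_right hB hexp)
    _ = B * B * exp (-y) := by ring

lemma integrableOn_Ioi_mul_min_mul_exp (hΩm : AEMeasurable Ω (volume.restrict (Ioi 0)))
    (hΩ : ∀ y, 0 ≤ y → 0 ≤ Ω y ∧ Ω y ≤ B * exp (-y)) (hν : 0 ≤ ν) (hlam : 0 < lam) :
    IntegrableOn (fun y ↦ Ω y * min (lam * y) 1 * exp (-ν * y)) (Ioi 0) := by
  refine integrableOn_Ioi_of_norm_le_exp_neg ((hΩm.mul (by fun_prop)).mul (by fun_prop)) B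
    fun y hy ↦ ?_
  obtain ⟨h0, hle⟩ := hΩ y hy.le
  have hexp : exp (-ν * y) ≤ 1 := exp_le_one_iff.2 (by nlinarith)
  have hB : 0 ≤ B := nonneg_of_mul_nonneg_left (h0.trans hle) (exp_pos (-y))
  rw [Real.norm_of_nonneg (by positivity)]
  calc Ω y * min (lam * y) 1 * exp (-ν * y) ≤ (B * exp (-y)) * 1 * 1 := by
        gcongr
        exact min_le_right (lam * y) 1
    _ = B * exp (-y) := by ring

lemma sq_mul_mul_exp_neg_div_three_le_integral (hθ : 0 ≤ θ)
    (hΩlow : ∀ y ∈ Icc (0 : ℝ) 1, θ * y ≤ Ω y) (hΩ0 : ∀ y, 0 ≤ y → 0 ≤ Ω y) (hν : 0 ≤ ν)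
    (hlam0 : 0 < lam) (hlam1 : lam ≤ 1)
    (hint : IntegrableOn (fun y ↦ Ω y * Ω (lam * y) * exp (-ν * y)) (Ioi 0)) :
    θ ^ 2 * lam * exp (-ν) / 3 ≤ ∫ y in Ioi 0, Ω y * Ω (lam * y) * exp (-ν * y) := by
  have hpoint : ∀ y ∈ Ioc (0 : ℝ) 1,
      θ ^ 2 * lam * exp (-ν) * y ^ 2 ≤ Ω y * Ω (lam * y) * exp (-ν * y) := by
    rintro y ⟨hy0, hy1⟩
    have hΩy := hΩlow y ⟨hy0.le, hy1⟩
    have hΩly := hΩlow (lam * y) ⟨by positivity, by nlinarith⟩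
    have hexp : exp (-ν) ≤ exp (-ν * y) := exp_le_exp.2 (by nlinarith)
    calc θ ^ 2 * lam * exp (-ν) * y ^ 2 = (θ * y) * (θ * (lam * y)) * exp (-ν) := by ring
      _ ≤ Ω y * Ω (lam * y) * exp (-ν * y) := by
        have := hΩ0 y hy0.le
        have := hΩ0 (lam * y) (by positivity)
        gcongr
  calc θ ^ 2 * lam * exp (-ν) / 3 = ∫ y in Ioc (0 : ℝ) 1, θ ^ 2 * lam * exp (-ν) * y ^ 2 := by
        rw [integral_const_mul, ← intervalIntegral.integral_of_le zero_le_one, integral_pow]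
        ring
    _ ≤ ∫ y in Ioc (0 : ℝ) 1, Ω y * Ω (lam * y) * exp (-ν * y) :=
        setIntegral_mono_on (Continuous.integrableOn_Ioc (by fun_prop))
          (hint.mono_set Ioc_subset_Ioi_self) measurableSet_Ioc hpoint
    _ ≤ ∫ y in Ioi 0, Ω y * Ω (lam * y) * exp (-ν * y) := by
        refine setIntegral_mono_set hint ?_ (Filter.Eventually.of_forall Ioc_subset_Ioi_self)
        refine (ae_restrict_iff' measurableSet_Ioi).2 (Filter.Eventually.of_forall fun y hy ↦ ?_)
        have := hΩ0 y (le_of_lt hy)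
        have := hΩ0 (lam * y) (by positivity [mem_Ioi.1 hy])
        positivity

lemma mul_min_mul_exp_le (hθ : 0 < θ) (hΩlow : ∀ y ∈ Icc (0 : ℝ) 1, θ * y ≤ Ω y)
    (hΩ : ∀ y, 0 ≤ y → 0 ≤ Ω y ∧ Ω y ≤ B * exp (-y)) (hν : 0 ≤ ν) (hlam0 : 0 < lam)
    (hlam1 : lam ≤ 1) {y : ℝ} (hy : 0 < y) :
    Ω y * min (lam * y) 1 * exp (-ν * y) ≤ θ⁻¹ * (Ω y * Ω (lam * y) * exp (-ν * y)) +
      (Ioi lam⁻¹).indicator (fun y ↦ B * exp (-ν) * exp (-y)) y := by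
  obtain ⟨h0, hle⟩ := hΩ y hy.le
  have h0' := (hΩ (lam * y) (by positivity)).1
  rcases le_or_gt (lam * y) 1 with hsmall | hlarge
  · have hyI : y ∉ Ioi lam⁻¹ := fun h ↦ by
      rw [mem_Ioi, inv_lt_iff_one_lt_mul₀' hlam0] at h; linarith
    have hΩly : lam * y ≤ θ⁻¹ * Ω (lam * y) := by
      rw [le_inv_mul_iff₀ hθ]; exact hΩlow _ ⟨by positivity, hsmall⟩
    rw [indicator_of_notMem hyI, add_zero, min_eq_left hsmall]
    calc Ω y * (lam * y) * exp (-ν * y) ≤ Ω y * (θ⁻¹ * Ω (lam * y)) * exp (-ν * y) := by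
          gcongr
      _ = θ⁻¹ * (Ω y * Ω (lam * y) * exp (-ν * y)) := by ring
  · have hyI : y ∈ Ioi lam⁻¹ := by
      rwa [mem_Ioi, inv_lt_iff_one_lt_mul₀' hlam0]
    have hexp : exp (-ν * y) ≤ exp (-ν) := exp_le_exp.2 (by nlinarith)
    have hB : 0 ≤ B := nonneg_of_mul_nonneg_left (h0.trans hle) (exp_pos (-y))
    rw [indicator_of_mem hyI]
    calc Ω y * min (lam * y) 1 * exp (-ν * y) ≤ (B * exp (-y)) * 1 * exp (-ν) := by
          gcongr
          exact min_le_right _ _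
      _ ≤ θ⁻¹ * (Ω y * Ω (lam * y) * exp (-ν * y)) + B * exp (-ν) * exp (-y) := by
          nlinarith [show 0 ≤ θ⁻¹ * (Ω y * Ω (lam * y) * exp (-ν * y)) by positivity]

lemma integral_mul_min_mul_exp_le (hθ : 0 < θ) (hΩlow : ∀ y ∈ Icc (0 : ℝ) 1, θ * y ≤ Ω y)
    (hΩ : ∀ y, 0 ≤ y → 0 ≤ Ω y ∧ Ω y ≤ B * exp (-y))
    (hΩm : AEMeasurable Ω (volume.restrict (Ioi 0))) (hν : 0 ≤ ν) (hlam0 : 0 < lam)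
    (hlam1 : lam ≤ 1) :
    ∫ y in Ioi 0, Ω y * min (lam * y) 1 * exp (-ν * y) ≤
      (θ⁻¹ + 3 * B / θ ^ 2) * ∫ y in Ioi 0, Ω y * Ω (lam * y) * exp (-ν * y) := by
  set I := ∫ y in Ioi 0, Ω y * Ω (lam * y) * exp (-ν * y)
  set tail := (Ioi lam⁻¹).indicator fun y ↦ B * exp (-ν) * exp (-y)
  have hB : 0 ≤ B := nonneg_of_mul_nonneg_left ((hΩ 0 le_rfl).1.trans (hΩ 0 le_rfl).2) (exp_pos _)
  have hint := integrableOn_Ioi_mul_comp_mul_exp hΩm hΩ hν hlam0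
  have hI : θ ^ 2 * lam * exp (-ν) / 3 ≤ I :=
    sq_mul_mul_exp_neg_div_three_le_integral hθ.le hΩlow (fun y hy ↦ (hΩ y hy).1) hν hlam0
      hlam1 hint
  have htail : IntegrableOn tail (Ioi 0) := by
    refine Integrable.indicator ?_ measurableSet_Ioi
    simpa using (exp_neg_integrableOn_Ioi 0 one_pos).const_mul (B * exp (-ν))
  have htail_eq : ∫ y in Ioi 0, tail y = B * exp (-ν) * exp (-lam⁻¹) := by
    rw [setIntegral_indicator measurableSet_Ioi, Ioi_inter_Ioi,
      max_eq_right (inv_pos.2 hlam0).le, integral_const_mul, integral_exp_neg_Ioi]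
  calc ∫ y in Ioi 0, Ω y * min (lam * y) 1 * exp (-ν * y)
      ≤ ∫ y in Ioi 0, (θ⁻¹ * (Ω y * Ω (lam * y) * exp (-ν * y)) + tail y) :=
        setIntegral_mono_on (integrableOn_Ioi_mul_min_mul_exp hΩm hΩ hν hlam0)
          ((hint.const_mul _).add htail) measurableSet_Ioi
          fun y hy ↦ mul_min_mul_exp_le hθ hΩlow hΩ hν hlam0 hlam1 hy
    _ = θ⁻¹ * I + B * exp (-ν) * exp (-lam⁻¹) := by
        rw [integral_add (hint.const_mul _) htail, integral_const_mul, htail_eq]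
    _ ≤ θ⁻¹ * I + B * exp (-ν) * lam := by
        gcongr
        exact exp_neg_inv_le hlam0
    _ ≤ θ⁻¹ * I + 3 * B / θ ^ 2 * I := by
        rw [div_mul_eq_mul_div, add_le_add_iff_left, le_div_iff₀ (by positivity)]
        nlinarith [mul_le_mul_of_nonneg_left hI hB]
    _ = (θ⁻¹ + 3 * B / θ ^ 2) * I := by ring

lemma integral_mul_min_mul_exp_le_exp_mul {a K Γ : ℝ} (ha : 0 ≤ a) (hK : 0 ≤ K) (hKΓ : K ≤ Γ)
    (hΩ : ∀ y, 0 ≤ y → 0 ≤ Ω y ∧ Ω y ≤ B * exp (-y))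
    (hΩm : AEMeasurable Ω (volume.restrict (Ioi 0))) (hν : 0 ≤ ν) (hlam : 0 < lam) :
    ∫ y in Ioi 0, Ω y * min (lam * y * exp (-a * Γ)) (exp (-a * lam * y * K)) * exp (-ν * y) ≤
      exp (-a * K) * ∫ y in Ioi 0, Ω y * min (lam * y) 1 * exp (-ν * y) := by
  rw [← integral_const_mul]
  refine integral_mono_of_nonneg ?_ ((integrableOn_Ioi_mul_min_mul_exp hΩm hΩ hν hlam).const_mul _)
    ((ae_restrict_iff' measurableSet_Ioi).2 (Filter.Eventually.of_forall fun y hy ↦ ?_))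
  · refine (ae_restrict_iff' measurableSet_Ioi).2 (Filter.Eventually.of_forall fun y hy ↦ ?_)
    have := (hΩ y (le_of_lt hy)).1
    have : 0 < lam * y := mul_pos hlam hy
    positivity
  · have hmin := min_mul_exp_le_exp_mul_min ha hK hKΓ (mul_pos hlam hy).le
    rw [← mul_assoc (-a) lam y] at hmin
    have := (hΩ y (le_of_lt hy)).1
    calc Ω y * min (lam * y * exp (-a * Γ)) (exp (-a * lam * y * K)) * exp (-ν * y)
        ≤ Ω y * (exp (-a * K) * min (lam * y) 1) * exp (-ν * y) := by gcongr
      _ = exp (-a * K) * (Ω y * min (lam * y) 1 * exp (-ν * y)) := by ring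

end

theorem stmt_16_general (θ : ℝ) (hθ0 : 0 < θ) :
    ∃ a > (0:ℝ), ∃ C > (0:ℝ),
      ∀ (ν : ℝ), 0 ≤ ν → ∀ (Ω : ℝ → ℝ),
        (∀ y ∈ Set.Icc (0:ℝ) 1, θ * y ≤ Ω y) →
        (∀ y : ℝ, 0 ≤ y → 0 ≤ Ω y ∧ Ω y ≤ 6 * Real.exp (-y)) →
        ∀ lam : ℝ, 0 < lam → lam ≤ 1 → ∀ Γ : ℝ, 1 ≤ Γ →
          (∫ y in Set.Ioi (0:ℝ),
              Ω y * min (lam * y * Real.exp (-a * Γ))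
                (Real.exp (-a * lam * y * Γ ^ ((1:ℝ)/3))) * Real.exp (-ν * y))
            ≤ C * Real.exp (-a * Γ ^ ((1:ℝ)/3)) *
              ∫ y in Set.Ioi (0:ℝ), Ω y * Ω (lam * y) * Real.exp (-ν * y) := by
  refine ⟨1, one_pos, θ⁻¹ + 3 * 6 / θ ^ 2, by positivity, ?_⟩
  intro ν hν Ω hΩlow hΩ lam hlam0 hlam1 Γ hΓ
  set f := fun y ↦ Ω y * min (lam * y * exp (-1 * Γ)) (exp (-1 * lam * y * Γ ^ ((1:ℝ)/3))) *
    exp (-ν * y)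
  -- `Ω` is not assumed measurable: integrability of the left side forces it, and otherwise the
  -- left side is the junk value `0`.
  by_cases hf : IntegrableOn f (Ioi 0)
  · have hΩm : AEMeasurable Ω (volume.restrict (Ioi 0)) := by
      refine AEMeasurable.of_mul_right (w := fun y ↦ min (lam * y * exp (-1 * Γ))
        (exp (-1 * lam * y * Γ ^ ((1:ℝ)/3))) * exp (-ν * y))
        (by simpa only [f, mul_assoc] using hf.aemeasurable) (by fun_prop)
        ((ae_restrict_iff' measurableSet_Ioi).2 (Filter.Eventually.of_forall fun y hy ↦ ?_))
      have : 0 < lam * y := mul_pos hlam0 hy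
      positivity
    have hK : Γ ^ ((1:ℝ)/3) ≤ Γ := Real.rpow_le_self_of_one_le hΓ (by norm_num)
    calc ∫ y in Ioi 0, f y
        ≤ exp (-1 * Γ ^ ((1:ℝ)/3)) * ∫ y in Ioi 0, Ω y * min (lam * y) 1 * exp (-ν * y) :=
          integral_mul_min_mul_exp_le_exp_mul zero_le_one (by positivity) hK hΩ hΩm hν hlam0
      _ ≤ exp (-1 * Γ ^ ((1:ℝ)/3)) * ((θ⁻¹ + 3 * 6 / θ ^ 2) *
            ∫ y in Ioi 0, Ω y * Ω (lam * y) * exp (-ν * y)) := by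
          gcongr
          exact integral_mul_min_mul_exp_le hθ0 hΩlow hΩ hΩm hν hlam0 hlam1
      _ = _ := by ring
  · rw [integral_undef hf]
    refine mul_nonneg (by positivity) (setIntegral_nonneg measurableSet_Ioi fun y hy ↦ ?_)
    have := (hΩ y (le_of_lt hy)).1
    have := (hΩ (lam * y) (by positivity [mem_Ioi.1 hy])).1
    positivity

theorem stmt_16 (θ : ℝ) (hθ0 : 0 < θ) (hθ1 : θ ≤ 1) :
    ∃ a > (0:ℝ), ∃ C > (0:ℝ),
      ∀ (ν : ℝ), 0 ≤ ν → ∀ (Ω : ℝ → ℝ),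
        (∀ y ∈ Set.Icc (0:ℝ) 1, θ * y ≤ Ω y) →
        (∀ y : ℝ, 0 ≤ y → 0 ≤ Ω y ∧ Ω y ≤ 6 * Real.exp (-y)) →
        ∀ lam : ℝ, 0 < lam → lam ≤ 1 → ∀ Γ : ℝ, 1 ≤ Γ →
          (∫ y in Set.Ioi (0:ℝ),
              Ω y * min (lam * y * Real.exp (-a * Γ))
                (Real.exp (-a * lam * y * Γ ^ ((1:ℝ)/3))) * Real.exp (-ν * y))
            ≤ C * Real.exp (-a * Γ ^ ((1:ℝ)/3)) *
              ∫ y in Set.Ioi (0:ℝ), Ω y * Ω (lam * y) * Real.exp (-ν * y) :=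
  stmt_16_general θ hθ0
end
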